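/- Let A ∈ ℝ^{m×n} have nonzero rows and columns, b̂ = b + r with b ∈ R(A), r ∈ R(A)^⊥, and α, ω ∈ (0,2). Suppose the index sequences (j_k) ⊂ [n] and (i_k) ⊂ [m] are almost cyclic: there exist n₀, m₀ ∈ ℕ such that every window of n₀ consecutive j-indices covers all of [n] and every window of m₀ consecutive i-indices covers all of [m]. Then the iterates x^k = x^{k-1} − ω(⟨A_{i_k}, x^{k-1}⟩ − b̂^k_{i_k})/‖A_{i_k}‖² · A_{i_k}, where b̂^k = b̂ − y^k and y^k = y^{k-1} − α(⟨y^{k-1}, A^{j_k}⟩/‖A^{j_k}‖²)A^{j_k} with y⁰ = b̂, converge to a least-squares solution of Ax = b̂ for any starting point x⁰ ∈ ℝⁿ. -/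

import Mathlib

open scoped RealInnerProductSpace
open Filter Topology

variable {V : Type*} [NormedAddCommGroup V] [InnerProductSpace ℝ V]

noncomputable def kstep (lam : ℝ) (c u : V) : V :=
  u - ((lam * ⟪u, c⟫) / ‖c‖ ^ 2) • c

lemma kstep_zero (lam : ℝ) (c : V) : kstep lam c (0 : V) = 0 := by
  simp [kstep]

lemma kstep_sub (lam : ℝ) (c u v : V) :
    kstep lam c u - kstep lam c v = kstep lam c (u - v) := by
  simp only [kstep, inner_sub_left]
  have : lam * (⟪u, c⟫ - ⟪v, c⟫) / ‖c‖ ^ 2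
      = lam * ⟪u, c⟫ / ‖c‖ ^ 2 - lam * ⟪v, c⟫ / ‖c‖ ^ 2 := by ring
  rw [this, sub_smul]
  abel

lemma kstep_smul (lam : ℝ) (c : V) (a : ℝ) (u : V) :
    kstep lam c (a • u) = a • kstep lam c u := by
  simp only [kstep, real_inner_smul_left, smul_sub, smul_smul]
  ring_nf

lemma kstep_norm_sq (lam : ℝ) {c : V} (hc : c ≠ 0) (u : V) :
    ‖kstep lam c u‖ ^ 2 = ‖u‖ ^ 2 - lam * (2 - lam) * ⟪u, c⟫ ^ 2 / ‖c‖ ^ 2 := by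
  have hc2 : (‖c‖ : ℝ) ^ 2 ≠ 0 := pow_ne_zero _ (norm_ne_zero_iff.2 hc)
  rw [kstep, norm_sub_sq_real, real_inner_smul_right, norm_smul, mul_pow]
  rw [Real.norm_eq_abs, sq_abs]
  field_simp
  ring

lemma kstep_norm_le {lam : ℝ} (hlam : lam ∈ Set.Ioo (0:ℝ) 2) {c : V} (hc : c ≠ 0) (u : V) :
    ‖kstep lam c u‖ ≤ ‖u‖ := by
  have h := kstep_norm_sq lam hc u
  have hc2 : (0:ℝ) < ‖c‖ ^ 2 := by
    have : (0:ℝ) < ‖c‖ := norm_pos_iff.mpr hc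
    positivity
  have h1 : 0 ≤ lam * (2 - lam) * ⟪u, c⟫ ^ 2 / ‖c‖ ^ 2 := by
    have := hlam.1; have := hlam.2
    have : 0 ≤ lam * (2 - lam) := by nlinarith
    positivity
  nlinarith [norm_nonneg (kstep lam c u), norm_nonneg u]

lemma kstep_lipschitz {lam : ℝ} (hlam : lam ∈ Set.Ioo (0:ℝ) 2) {c : V} (hc : c ≠ 0) (u v : V) :
    ‖kstep lam c u - kstep lam c v‖ ≤ ‖u - v‖ := by
  rw [kstep_sub]; exact kstep_norm_le hlam hc _

lemma kstep_eq_of_inner {lam : ℝ} {c u : V} (h : ⟪u, c⟫ = 0) : kstep lam c u = u := by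
  simp [kstep, h]

lemma inner_eq_zero_of_norm_eq {lam : ℝ} (hlam : lam ∈ Set.Ioo (0:ℝ) 2) {c : V} (hc : c ≠ 0)
    {u : V} (h : ‖kstep lam c u‖ = ‖u‖) : ⟪u, c⟫ = 0 := by
  have hns := kstep_norm_sq lam hc u
  rw [h] at hns
  have hc2 : (0:ℝ) < ‖c‖ ^ 2 := by
    have : (0:ℝ) < ‖c‖ := norm_pos_iff.mpr hc
    positivity
  have h1 : lam * (2 - lam) > 0 := by have := hlam.1; have := hlam.2; nlinarith
  have h3 : lam * (2 - lam) * ⟪u, c⟫ ^ 2 / ‖c‖ ^ 2 = 0 := by linarith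
  rw [div_eq_zero_iff] at h3
  rcases h3 with h3 | h3
  · rcases mul_eq_zero.mp h3 with h4 | h4
    · exact absurd h4 (ne_of_gt h1)
    · exact pow_eq_zero_iff two_ne_zero |>.mp h4
  · exact absurd h3 (ne_of_gt hc2)

noncomputable def ksteps (lam : ℝ) : List V → V → V
  | [], u => u
  | c :: cs, u => ksteps lam cs (kstep lam c u)

lemma ksteps_zero (lam : ℝ) (l : List V) : ksteps lam l (0 : V) = 0 := by
  induction l with
  | nil => rfl
  | cons c cs ih => rw [ksteps, kstep_zero, ih]

lemma ksteps_smul (lam : ℝ) (l : List V) (a : ℝ) (u : V) :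
    ksteps lam l (a • u) = a • ksteps lam l u := by
  induction l generalizing u with
  | nil => rfl
  | cons c cs ih => rw [ksteps, kstep_smul, ih, ksteps]

lemma ksteps_norm_le {lam : ℝ} (hlam : lam ∈ Set.Ioo (0:ℝ) 2) {l : List V}
    (hl : ∀ d ∈ l, d ≠ 0) (u : V) : ‖ksteps lam l u‖ ≤ ‖u‖ := by
  induction l generalizing u with
  | nil => exact le_refl _
  | cons c cs ih =>
    calc ‖ksteps lam cs (kstep lam c u)‖ ≤ ‖kstep lam c u‖ :=
          ih (fun d hd => hl d (List.mem_cons_of_mem _ hd)) _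
      _ ≤ ‖u‖ := kstep_norm_le hlam (hl c List.mem_cons_self) u

lemma ksteps_append (lam : ℝ) (l₁ l₂ : List V) (u : V) :
    ksteps lam (l₁ ++ l₂) u = ksteps lam l₂ (ksteps lam l₁ u) := by
  induction l₁ generalizing u with
  | nil => rfl
  | cons c cs ih => rw [List.cons_append, ksteps, ksteps, ih]

lemma ksteps_norm_eq {lam : ℝ} (hlam : lam ∈ Set.Ioo (0:ℝ) 2) {l : List V}
    (hl : ∀ d ∈ l, d ≠ 0) {u : V} (h : ‖ksteps lam l u‖ = ‖u‖) :
    ∀ d ∈ l, ⟪u, d⟫ = 0 := by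
  induction l generalizing u with
  | nil => intro d hd; exact absurd hd List.not_mem_nil
  | cons c cs ih =>
    have hc : c ≠ 0 := hl c List.mem_cons_self
    have hcs : ∀ d ∈ cs, d ≠ 0 := fun d hd => hl d (List.mem_cons_of_mem _ hd)
    have h1 : ‖ksteps lam cs (kstep lam c u)‖ ≤ ‖kstep lam c u‖ := ksteps_norm_le hlam hcs _
    have h2 : ‖kstep lam c u‖ ≤ ‖u‖ := kstep_norm_le hlam hc u
    have h3 : ‖kstep lam c u‖ = ‖u‖ := by
      rw [ksteps] at h; exact le_antisymm h2 (h ▸ h1)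
    have h4 : ⟪u, c⟫ = 0 := inner_eq_zero_of_norm_eq hlam hc h3
    have h5 : kstep lam c u = u := kstep_eq_of_inner h4
    intro d hd
    rcases List.mem_cons.mp hd with rfl | hd
    · exact h4
    · refine ih hcs ?_ d hd
      rw [← h5]
      rw [ksteps] at h
      rw [h, h3]

lemma ksteps_continuous (lam : ℝ) (l : List V) : Continuous (fun u : V => ksteps lam l u) := by
  induction l with
  | nil => exact continuous_id
  | cons c cs ih =>
    have h1 : Continuous (fun u : V => kstep lam c u) := by
      unfold kstep
      have hinner : Continuous (fun u : V => (lam * ⟪u, c⟫) / ‖c‖ ^ 2) := by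
        exact ((continuous_const.mul (continuous_id.inner continuous_const)).div_const _)
      exact continuous_id.sub (hinner.smul continuous_const)
    exact ih.comp h1

lemma eq_zero_of_inner_gen {ι : Type*} (c : ι → V) {u : V}
    (hu : u ∈ Submodule.span ℝ (Set.range c)) (h : ∀ i, ⟪u, c i⟫ = 0) : u = 0 := by
  have key : ∀ v ∈ Submodule.span ℝ (Set.range c), ⟪u, v⟫ = 0 := by
    intro v hv
    induction hv using Submodule.span_induction with
    | mem v hv => obtain ⟨i, rfl⟩ := hv; exact h i
    | zero => exact inner_zero_right u
    | add v w _ _ hv hw => rw [inner_add_right, hv, hw, add_zero]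
    | smul a v _ hv => rw [real_inner_smul_right, hv, mul_zero]
  have := key u hu
  exact inner_self_eq_zero.mp this

lemma exists_contraction [FiniteDimensional ℝ V] {ι : Type*} [Fintype ι] [DecidableEq ι]
    (c : ι → V) (hc : ∀ i, c i ≠ 0) {lam : ℝ} (hlam : lam ∈ Set.Ioo (0:ℝ) 2) (L : ℕ) :
    ∃ ρ : ℝ, 0 ≤ ρ ∧ ρ < 1 ∧ ∀ σ : Fin L → ι, (∀ i, ∃ t, σ t = i) →
      ∀ u ∈ Submodule.span ℝ (Set.range c), ‖ksteps lam (List.ofFn (c ∘ σ)) u‖ ≤ ρ * ‖u‖ := by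
  set S := Submodule.span ℝ (Set.range c) with hS
  have hmemlist : ∀ (σ : Fin L → ι) (d : V), d ∈ List.ofFn (c ∘ σ) → d ≠ 0 := by
    intro σ d hd
    rw [List.mem_ofFn] at hd
    obtain ⟨t, rfl⟩ := hd
    exact hc _
  have key : ∀ σ : Fin L → ι, ∃ ρσ : ℝ, 0 ≤ ρσ ∧ ρσ < 1 ∧ ((∀ i, ∃ t, σ t = i) →
      ∀ u ∈ S, ‖ksteps lam (List.ofFn (c ∘ σ)) u‖ ≤ ρσ * ‖u‖) := by
    intro σ
    by_cases hcov : ∀ i, ∃ t, σ t = i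
    swap
    · exact ⟨0, le_refl _, one_pos, fun h => absurd h hcov⟩
    by_cases hbot : S = ⊥
    · refine ⟨0, le_refl _, one_pos, fun _ u hu => ?_⟩
      rw [hbot, Submodule.mem_bot] at hu
      subst hu
      rw [ksteps_zero]
      simp
    · -- compact sphere argument
      obtain ⟨v, hvS, hv0⟩ := Submodule.exists_mem_ne_zero_of_ne_bot hbot
      set C : Set V := {u : V | u ∈ S ∧ ‖u‖ = 1} with hC
      have hCne : C.Nonempty := by
        refine ⟨‖v‖⁻¹ • v, S.smul_mem _ hvS, ?_⟩
        rw [norm_smul, norm_inv, norm_norm]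
        exact inv_mul_cancel₀ (norm_ne_zero_iff.mpr hv0)
      have hCcompact : IsCompact C := by
        have hclosed : IsClosed C := by
          have h1 : IsClosed (S : Set V) := Submodule.closed_of_finiteDimensional S
          have h2 : IsClosed {u : V | ‖u‖ = 1} := isClosed_eq continuous_norm continuous_const
          exact h1.inter h2
        have hbdd : Bornology.IsBounded C := by
          apply Bornology.IsBounded.subset (Metric.isBounded_closedBall (x := (0:V)) (r := 1))
          intro u hu
          simp [Metric.mem_closedBall, dist_eq_norm, hu.2.le]
        exact Metric.isCompact_of_isClosed_isBounded hclosed hbdd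
      have hcont : ContinuousOn (fun u : V => ‖ksteps lam (List.ofFn (c ∘ σ)) u‖) C :=
        ((ksteps_continuous lam _).norm).continuousOn
      obtain ⟨u₀, hu₀C, hmax'⟩ := hCcompact.exists_isMaxOn hCne hcont
      have hmax : ∀ u ∈ C, ‖ksteps lam (List.ofFn (c ∘ σ)) u‖ ≤
          ‖ksteps lam (List.ofFn (c ∘ σ)) u₀‖ := fun u hu => hmax' hu
      set ρσ := ‖ksteps lam (List.ofFn (c ∘ σ)) u₀‖ with hρσ
      have hρσ0 : 0 ≤ ρσ := norm_nonneg _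
      have hρσ1 : ρσ < 1 := by
        rcases lt_or_eq_of_le (le_trans (ksteps_norm_le hlam (hmemlist σ) u₀) hu₀C.2.le) with h | h
        · exact h
        · exfalso
          have heq : ‖ksteps lam (List.ofFn (c ∘ σ)) u₀‖ = ‖u₀‖ := by rw [h, hu₀C.2]
          have hin := ksteps_norm_eq hlam (hmemlist σ) heq
          have hzero : u₀ = 0 := by
            refine eq_zero_of_inner_gen c hu₀C.1 (fun i => ?_)
            obtain ⟨t, rfl⟩ := hcov i
            exact hin _ (by rw [List.mem_ofFn]; exact ⟨t, rfl⟩)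
          have h1 : ‖u₀‖ = 1 := hu₀C.2
          rw [hzero, norm_zero] at h1
          exact one_ne_zero h1.symm
      refine ⟨ρσ, hρσ0, hρσ1, fun _ u hu => ?_⟩
      by_cases hu0 : u = 0
      · subst hu0; rw [ksteps_zero]; simp
      · have hnu : (0:ℝ) < ‖u‖ := norm_pos_iff.mpr hu0
        have hmem : ‖u‖⁻¹ • u ∈ C := by
          refine ⟨S.smul_mem _ hu, ?_⟩
          rw [norm_smul, norm_inv, norm_norm]
          exact inv_mul_cancel₀ (ne_of_gt hnu)
        have := hmax _ hmem
        rw [ksteps_smul, norm_smul, norm_inv, norm_norm] at this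
        calc ‖ksteps lam (List.ofFn (c ∘ σ)) u‖
            = ‖u‖ * (‖u‖⁻¹ * ‖ksteps lam (List.ofFn (c ∘ σ)) u‖) := by field_simp
          _ ≤ ‖u‖ * ρσ := by
              apply mul_le_mul_of_nonneg_left this hnu.le
          _ = ρσ * ‖u‖ := mul_comm _ _
  choose ρf hρf0 hρf1 hρfb using key
  by_cases hne : Nonempty (Fin L → ι)
  · set F : Finset ℝ := insert 0 (Finset.univ.image ρf) with hF
    have hFne : F.Nonempty := ⟨0, Finset.mem_insert_self _ _⟩
    refine ⟨F.max' hFne, ?_, ?_, ?_⟩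
    · exact Finset.le_max' F 0 (Finset.mem_insert_self _ _)
    · rw [Finset.max'_lt_iff]
      intro a ha
      rcases Finset.mem_insert.mp ha with rfl | ha
      · exact one_pos
      · obtain ⟨σ, _, rfl⟩ := Finset.mem_image.mp ha
        exact hρf1 σ
    · intro σ hcov u hu
      calc ‖ksteps lam (List.ofFn (c ∘ σ)) u‖ ≤ ρf σ * ‖u‖ := hρfb σ hcov u hu
        _ ≤ F.max' hFne * ‖u‖ := by
            apply mul_le_mul_of_nonneg_right _ (norm_nonneg u)
            exact Finset.le_max' F _ (Finset.mem_insert_of_mem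
              (Finset.mem_image_of_mem _ (Finset.mem_univ σ)))
  · exact ⟨0, le_refl _, one_pos, fun σ _ => absurd ⟨σ⟩ hne⟩

lemma seq_tendsto_zero {a d : ℕ → ℝ} {ρ : ℝ} (hρ0 : 0 ≤ ρ) (hρ1 : ρ < 1)
    (ha : ∀ k, 0 ≤ a k) (hrec : ∀ k, a (k + 1) ≤ ρ * a k + d k)
    (hd : Tendsto d atTop (nhds 0)) : Tendsto a atTop (nhds 0) := by
  rw [Metric.tendsto_atTop]
  intro ε hε
  have hε' : 0 < ε * (1 - ρ) / 2 := by
    have : 0 < 1 - ρ := by linarith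
    positivity
  rw [Metric.tendsto_atTop] at hd
  obtain ⟨K, hK⟩ := hd (ε * (1 - ρ) / 2) hε'
  have hdK : ∀ k ≥ K, d k ≤ ε * (1 - ρ) / 2 := by
    intro k hk
    have := hK k hk
    rw [Real.dist_eq, sub_zero] at this
    exact le_of_lt ((abs_lt.mp this).2)
  have hbound : ∀ t, a (K + t) ≤ ρ ^ t * a K + ε / 2 := by
    intro t
    induction t with
    | zero => simp; linarith [ha K]
    | succ t ih =>
      have h1 : a (K + t + 1) ≤ ρ * a (K + t) + d (K + t) := hrec (K + t)
      have h2 : d (K + t) ≤ ε * (1 - ρ) / 2 := hdK _ (Nat.le_add_right K t)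
      have h3 : ρ * a (K + t) ≤ ρ * (ρ ^ t * a K + ε / 2) :=
        mul_le_mul_of_nonneg_left ih hρ0
      have : K + (t + 1) = K + t + 1 := by omega
      rw [this]
      calc a (K + t + 1) ≤ ρ * (ρ ^ t * a K + ε / 2) + ε * (1 - ρ) / 2 := by linarith
        _ = ρ ^ (t + 1) * a K + (ρ * ε / 2 + ε / 2 - ρ * ε / 2) := by ring
        _ ≤ ρ ^ (t + 1) * a K + ε / 2 := by linarith
  have hpow : Tendsto (fun t : ℕ => ρ ^ t * a K) atTop (nhds 0) := by
    have h := tendsto_pow_atTop_nhds_zero_of_lt_one hρ0 hρ1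
    simpa using h.mul_const (a K)
  rw [Metric.tendsto_atTop] at hpow
  obtain ⟨T, hT⟩ := hpow (ε / 2) (by positivity)
  refine ⟨K + T, fun k hk => ?_⟩
  have hkK : K ≤ k := le_trans (Nat.le_add_right K T) hk
  have hkey := hbound (k - K)
  rw [Nat.add_sub_cancel' hkK] at hkey
  have hTk : T ≤ k - K := by omega
  have := hT (k - K) hTk
  rw [Real.dist_eq, sub_zero] at this
  have h5 : ρ ^ (k - K) * a K < ε / 2 := lt_of_abs_lt this
  rw [Real.dist_eq, sub_zero, abs_of_nonneg (ha k)]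
  linarith

lemma conv_to_zero [FiniteDimensional ℝ V] {ι : Type*} [Fintype ι] [DecidableEq ι] [Nonempty ι]
    (c : ι → V) (hc : ∀ i, c i ≠ 0) {lam : ℝ} (hlam : lam ∈ Set.Ioo (0:ℝ) 2)
    (L : ℕ) (seq : ℕ → ι) (hcov : ∀ k i, ∃ l, k ≤ l ∧ l < k + L ∧ seq l = i)
    (e : ℕ → V) (he : ∀ k, e k ∈ Submodule.span ℝ (Set.range c))
    (δ : ℕ → ℝ) (hδ : ∀ k, ‖e (k + 1) - kstep lam (c (seq k)) (e k)‖ ≤ δ k)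
    (hδ0 : Tendsto δ atTop (nhds 0)) : Tendsto e atTop (nhds 0) := by
  have hL : 0 < L := by
    obtain ⟨l, h1, h2, _⟩ := hcov 0 (Classical.arbitrary ι)
    omega
  obtain ⟨ρ, hρ0, hρ1, hρ⟩ := exists_contraction c hc hlam L
  have hδnn : ∀ k, 0 ≤ δ k := fun k => le_trans (norm_nonneg _) (hδ k)
  -- drift bound
  have hdrift : ∀ k t, ‖e (k + t) -
      ksteps lam (List.ofFn (fun s : Fin t => c (seq (k + s)))) (e k)‖ ≤
      ∑ s ∈ Finset.range t, δ (k + s) := by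
    intro k t
    induction t with
    | zero => simp [ksteps]
    | succ t ih =>
      have hofn : (List.ofFn (fun s : Fin (t+1) => c (seq (k + s)))) =
          (List.ofFn (fun s : Fin t => c (seq (k + s)))) ++ [c (seq (k + t))] := by
        rw [List.ofFn_succ']
        simp [List.concat_eq_append]
      rw [hofn, ksteps_append]
      set W := ksteps lam (List.ofFn (fun s : Fin t => c (seq (k + s)))) (e k) with hW
      have hstep : ksteps lam [c (seq (k + t))] W = kstep lam (c (seq (k + t))) W := rfl
      rw [hstep]
      have h1 : ‖e (k + t + 1) - kstep lam (c (seq (k + t))) (e (k + t))‖ ≤ δ (k + t) :=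
        hδ (k + t)
      have h2 : ‖kstep lam (c (seq (k + t))) (e (k + t)) - kstep lam (c (seq (k + t))) W‖ ≤
          ‖e (k + t) - W‖ := kstep_lipschitz hlam (hc _) _ _
      calc ‖e (k + (t + 1)) - kstep lam (c (seq (k + t))) W‖
          = ‖(e (k + t + 1) - kstep lam (c (seq (k + t))) (e (k + t))) +
            (kstep lam (c (seq (k + t))) (e (k + t)) - kstep lam (c (seq (k + t))) W)‖ := by
            rw [show k + (t + 1) = k + t + 1 from by omega]; congr 1; abel
        _ ≤ δ (k + t) + ‖e (k + t) - W‖ := le_trans (norm_add_le _ _) (by gcongr)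
        _ ≤ δ (k + t) + ∑ s ∈ Finset.range t, δ (k + s) := by linarith
        _ = ∑ s ∈ Finset.range (t + 1), δ (k + s) := by
            rw [Finset.sum_range_succ]; ring
  -- window contraction bound
  have hwin : ∀ k, ‖e (k + L)‖ ≤ ρ * ‖e k‖ + ∑ s ∈ Finset.range L, δ (k + s) := by
    intro k
    set σ : Fin L → ι := fun t => seq (k + t) with hσ
    have hσcov : ∀ i, ∃ t : Fin L, σ t = i := by
      intro i
      obtain ⟨l, h1, h2, h3⟩ := hcov k i
      exact ⟨⟨l - k, by omega⟩, by simp [hσ]; rw [show k + (l - k) = l from by omega]; exact h3⟩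
    have hb := hρ σ hσcov (e k) (he k)
    have hlist : List.ofFn (c ∘ σ) = List.ofFn (fun s : Fin L => c (seq (k + s))) := rfl
    rw [hlist] at hb
    calc ‖e (k + L)‖ ≤ ‖ksteps lam (List.ofFn (fun s : Fin L => c (seq (k + s)))) (e k)‖ +
          ‖e (k + L) - ksteps lam (List.ofFn (fun s : Fin L => c (seq (k + s)))) (e k)‖ := by
          have := norm_add_le (ksteps lam (List.ofFn (fun s : Fin L => c (seq (k + s)))) (e k))
            (e (k + L) - ksteps lam (List.ofFn (fun s : Fin L => c (seq (k + s)))) (e k))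
          simpa using this
      _ ≤ ρ * ‖e k‖ + ∑ s ∈ Finset.range L, δ (k + s) := by
          have := hdrift k L
          linarith
  -- subsampled sequence
  set a : ℕ → ℝ := fun j => ‖e (j * L)‖ with ha
  set d : ℕ → ℝ := fun j => ∑ s ∈ Finset.range L, δ (j * L + s) with hd
  have hdto : Tendsto d atTop (nhds 0) := by
    have : ∀ s ∈ Finset.range L, Tendsto (fun j => δ (j * L + s)) atTop (nhds 0) := by
      intro s _
      apply hδ0.comp
      apply tendsto_atTop_mono (fun j => ?_) tendsto_id
      calc (j : ℕ) = j * 1 := (mul_one j).symm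
        _ ≤ j * L + s := by
            have : 1 ≤ L := hL
            calc j * 1 ≤ j * L := Nat.mul_le_mul_left j this
              _ ≤ j * L + s := Nat.le_add_right _ _
    have := tendsto_finset_sum (Finset.range L) this
    simpa using this
  have harec : ∀ j, a (j + 1) ≤ ρ * a j + d j := by
    intro j
    have := hwin (j * L)
    rw [show j * L + L = (j + 1) * L from by ring] at this
    exact this
  have haz : Tendsto a atTop (nhds 0) :=
    seq_tendsto_zero hρ0 hρ1 (fun j => norm_nonneg _) harec hdto
  -- full sequence
  have hsimple : ∀ k t, ‖e (k + t)‖ ≤ ‖e k‖ + ∑ s ∈ Finset.range t, δ (k + s) := by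
    intro k t
    have h1 := hdrift k t
    have h2 : ‖ksteps lam (List.ofFn (fun s : Fin t => c (seq (k + s)))) (e k)‖ ≤ ‖e k‖ := by
      apply ksteps_norm_le hlam
      intro dd hdd
      rw [List.mem_ofFn] at hdd
      obtain ⟨s, rfl⟩ := hdd
      exact hc _
    calc ‖e (k + t)‖ ≤ ‖ksteps lam (List.ofFn (fun s : Fin t => c (seq (k + s)))) (e k)‖ +
          ‖e (k + t) - ksteps lam (List.ofFn (fun s : Fin t => c (seq (k + s)))) (e k)‖ := by
          have := norm_add_le (ksteps lam (List.ofFn (fun s : Fin t => c (seq (k + s)))) (e k))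
            (e (k + t) - ksteps lam (List.ofFn (fun s : Fin t => c (seq (k + s)))) (e k))
          simpa using this
      _ ≤ ‖e k‖ + ∑ s ∈ Finset.range t, δ (k + s) := by linarith
  have hfull : ∀ k, ‖e k‖ ≤ a (k / L) + d (k / L) := by
    intro k
    have hdiv : k = (k / L) * L + k % L := by
      have := Nat.div_add_mod k L
      rw [mul_comm] at this
      omega
    have h1 := hsimple ((k / L) * L) (k % L)
    rw [← hdiv] at h1
    have h2 : ∑ s ∈ Finset.range (k % L), δ (k / L * L + s) ≤
        ∑ s ∈ Finset.range L, δ (k / L * L + s) := by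
      apply Finset.sum_le_sum_of_subset_of_nonneg
      · exact Finset.range_subset_range.mpr (le_of_lt (Nat.mod_lt k hL))
      · intro s _ _; exact hδnn _
    calc ‖e k‖ ≤ ‖e (k / L * L)‖ + ∑ s ∈ Finset.range (k % L), δ (k / L * L + s) := h1
      _ ≤ a (k / L) + d (k / L) := by
          rw [ha, hd]
          exact add_le_add (le_refl _) h2
  have hdivto : Tendsto (fun k : ℕ => k / L) atTop atTop := by
    apply tendsto_atTop_atTop.2
    intro b
    exact ⟨b * L, fun n hn => (Nat.le_div_iff_mul_le hL).2 hn⟩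
  have hgto : Tendsto (fun k => a (k / L) + d (k / L)) atTop (nhds 0) := by
    have := (haz.comp hdivto).add (hdto.comp hdivto)
    simpa using this
  have hn : Tendsto (fun k => ‖e k‖) atTop (nhds 0) :=
    squeeze_zero (fun k => norm_nonneg _) hfull hgto
  exact tendsto_zero_iff_norm_tendsto_zero.mpr hn

def row {m n : ℕ} (A : Matrix (Fin m) (Fin n) ℝ) (i : Fin m) :
    EuclideanSpace ℝ (Fin n) := WithLp.toLp 2 (fun j => A i j)

def col {m n : ℕ} (A : Matrix (Fin m) (Fin n) ℝ) (j : Fin n) :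
    EuclideanSpace ℝ (Fin m) := WithLp.toLp 2 (fun i => A i j)

def colSpace {m n : ℕ} (A : Matrix (Fin m) (Fin n) ℝ) :
    Submodule ℝ (EuclideanSpace ℝ (Fin m)) :=
  Submodule.span ℝ (Set.range (col A))

lemma coord_le_norm {N : ℕ} (u : EuclideanSpace ℝ (Fin N)) (i : Fin N) : |u i| ≤ ‖u‖ := by
  have h1 : ⟪EuclideanSpace.single i (1:ℝ), u⟫ = u i := by
    rw [EuclideanSpace.inner_single_left]; simp
  have h2 := abs_real_inner_le_norm (EuclideanSpace.single i (1:ℝ)) u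
  rw [h1, EuclideanSpace.norm_single] at h2
  simpa using h2

lemma mulVec_apply_eq_inner {m n : ℕ} (A : Matrix (Fin m) (Fin n) ℝ)
    (v : EuclideanSpace ℝ (Fin n)) (i : Fin m) :
    A.mulVec v i = ⟪row A i, v⟫ := by
  simp [Matrix.mulVec, dotProduct, PiLp.inner_apply, RCLike.inner_apply, row]
  exact Finset.sum_congr rfl fun _ _ => mul_comm _ _

theorem stmt_19 {m n : ℕ} (A : Matrix (Fin m) (Fin n) ℝ)
    (hrow : ∀ i, row A i ≠ 0) (hcol : ∀ j, col A j ≠ 0)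
    (b r : EuclideanSpace ℝ (Fin m))
    (hb : b ∈ colSpace A) (hr : r ∈ (colSpace A)ᗮ)
    (α ω : ℝ) (hα : α ∈ Set.Ioo (0 : ℝ) 2) (hω : ω ∈ Set.Ioo (0 : ℝ) 2)
    (y : ℕ → EuclideanSpace ℝ (Fin m)) (x : ℕ → EuclideanSpace ℝ (Fin n))
    (jk : ℕ → Fin n) (ik : ℕ → Fin m)
    (hjac : ∃ n₀ : ℕ, ∀ k, ∀ j : Fin n, ∃ l, k < l ∧ l ≤ k + n₀ ∧ jk l = j)
    (hiac : ∃ m₀ : ℕ, ∀ k, ∀ i : Fin m, ∃ l, k < l ∧ l ≤ k + m₀ ∧ ik l = i)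
    (hy0 : y 0 = b + r)
    (hyrec : ∀ k, y (k + 1) = y k -
      ((α * ⟪y k, col A (jk k)⟫) / ‖col A (jk k)‖ ^ 2) • col A (jk k))
    (hxrec : ∀ k, x (k + 1) = x k -
      ((ω * (⟪row A (ik k), x k⟫ - ((b + r) - y (k + 1)) (ik k))) / ‖row A (ik k)‖ ^ 2)
        • row A (ik k)) :
    ∃ xbar : EuclideanSpace ℝ (Fin n),
      Tendsto x atTop (nhds xbar) ∧ A.mulVec xbar = b := by
  rcases Nat.eq_zero_or_pos n with rfl | hn
  · exact (jk 0).elim0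
  rcases Nat.eq_zero_or_pos m with rfl | hm
  · exact (ik 0).elim0
  have : NeZero n := ⟨hn.ne'⟩
  have : NeZero m := ⟨hm.ne'⟩
  obtain ⟨n₀, hjac⟩ := hjac
  obtain ⟨m₀, hiac⟩ := hiac
  -- orthogonality of r to columns
  have hrc : ∀ j, ⟪r, col A j⟫ = 0 := by
    intro j
    rw [real_inner_comm]
    exact hr (col A j) (Submodule.subset_span ⟨j, rfl⟩)
  -- step 1 : y k - r → 0
  have hyE : ∀ k, y (k + 1) - r = kstep α (col A (jk k)) (y k - r) := by
    intro k
    rw [kstep, hyrec k, inner_sub_left, hrc, sub_zero]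
    abel
  have heyS : ∀ k, y k - r ∈ colSpace A := by
    intro k
    induction k with
    | zero => rw [hy0]; simpa using hb
    | succ k ih =>
      rw [hyE k, kstep]
      exact Submodule.sub_mem _ ih (Submodule.smul_mem _ _ (Submodule.subset_span ⟨jk k, rfl⟩))
  have hytend : Tendsto (fun k => y k - r) atTop (nhds 0) := by
    apply conv_to_zero (col A) hcol hα (n₀ + 1) jk
      (fun k i => by obtain ⟨l, h1, h2, h3⟩ := hjac k i; exact ⟨l, by omega, by omega, h3⟩)
      (fun k => y k - r) heyS (fun _ => 0)
      (fun k => by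
        show ‖(y (k + 1) - r) - kstep α (col A (jk k)) (y k - r)‖ ≤ (0:ℝ)
        rw [hyE k]; simp) tendsto_const_nhds
  -- existence of a solution of A x = b
  have hsol : ∃ w : EuclideanSpace ℝ (Fin n), A.mulVec w = b := by
    set R : Submodule ℝ (EuclideanSpace ℝ (Fin m)) :=
      { carrier := {v | ∃ w : EuclideanSpace ℝ (Fin n), A.mulVec w = v}
        add_mem' := by
          rintro v₁ v₂ ⟨w₁, h₁⟩ ⟨w₂, h₂⟩
          exact ⟨w₁ + w₂, by simp [Matrix.mulVec_add, h₁, h₂]⟩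
        zero_mem' := ⟨0, Matrix.mulVec_zero A⟩
        smul_mem' := by
          rintro a v ⟨w, h⟩
          exact ⟨a • w, by simp [Matrix.mulVec_smul, h]⟩ } with hR
    have hle : colSpace A ≤ R := by
      rw [colSpace, Submodule.span_le]
      rintro v ⟨j, rfl⟩
      exact ⟨EuclideanSpace.single j 1, by funext i; simp [col]⟩
    exact hle hb
  obtain ⟨w₀, hw₀⟩ := hsol
  -- null vectors map to zero
  set SR : Submodule ℝ (EuclideanSpace ℝ (Fin n)) := Submodule.span ℝ (Set.range (row A)) with hSR
  have hmul0 : ∀ v ∈ SRᗮ, A.mulVec v = 0 := by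
    intro v hv
    funext i
    rw [mulVec_apply_eq_inner]
    exact hv (row A i) (Submodule.subset_span ⟨i, rfl⟩)
  set p : EuclideanSpace ℝ (Fin n) := (SR.orthogonalProjectionOnto (x 0 - w₀) : EuclideanSpace ℝ (Fin n)) with hp
  set q : EuclideanSpace ℝ (Fin n) := (x 0 - w₀) - p with hq
  have hqmem : q ∈ SRᗮ := SR.sub_starProjection_mem_orthogonal (x 0 - w₀)
  set xbar : EuclideanSpace ℝ (Fin n) := w₀ + q with hxbar
  have hAxbar : A.mulVec xbar = b := by
    rw [hxbar]
    have : A.mulVec (w₀ + q) = A.mulVec w₀ + A.mulVec q := Matrix.mulVec_add A w₀ q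
    rw [WithLp.ofLp_add, this, hmul0 q hqmem, hw₀, add_zero]
  refine ⟨xbar, ?_, hAxbar⟩
  -- step 2 : x k - xbar → 0
  set e : ℕ → EuclideanSpace ℝ (Fin n) := fun k => x k - xbar with he
  have hbx : ∀ i, ⟪xbar, row A i⟫ = b i := by
    intro i
    rw [real_inner_comm, ← mulVec_apply_eq_inner, hAxbar]
  have hxE : ∀ k, e (k + 1) - kstep ω (row A (ik k)) (e k) =
      ((ω * ((((b + r) - y (k + 1)) (ik k)) - b (ik k))) / ‖row A (ik k)‖ ^ 2)
        • row A (ik k) := by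
    intro k
    have hinner : ⟪x k - xbar, row A (ik k)⟫ = ⟪row A (ik k), x k⟫ - b (ik k) := by
      rw [inner_sub_left, real_inner_comm (x k) (row A (ik k)), hbx]
    show (x (k + 1) - xbar) - kstep ω (row A (ik k)) (x k - xbar) = _
    rw [kstep, hxrec k, hinner]
    have harith : ∀ s t : ℝ, (x k - s • row A (ik k) - xbar) -
        ((x k - xbar) - t • row A (ik k)) = (t - s) • row A (ik k) := by
      intro s t
      rw [sub_smul]
      abel
    rw [harith]
    congr 1
    ring
  have he0 : e 0 ∈ SR := by
    have : e 0 = p := by rw [he, hxbar, hq]; module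
    rw [this]
    exact (SR.orthogonalProjectionOnto (x 0 - w₀)).2
  have heS : ∀ k, e k ∈ SR := by
    intro k
    induction k with
    | zero => exact he0
    | succ k ih =>
      have h1 : e (k + 1) = kstep ω (row A (ik k)) (e k) +
          ((ω * ((((b + r) - y (k + 1)) (ik k)) - b (ik k))) / ‖row A (ik k)‖ ^ 2)
            • row A (ik k) := by
        have := hxE k
        rw [sub_eq_iff_eq_add] at this
        rw [this]; abel
      rw [h1, kstep]
      have hamem : row A (ik k) ∈ SR := Submodule.subset_span ⟨ik k, rfl⟩
      exact Submodule.add_mem _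
        (Submodule.sub_mem _ ih (Submodule.smul_mem _ _ hamem))
        (Submodule.smul_mem _ _ hamem)
  have hmne : (Finset.univ : Finset (Fin m)).Nonempty := Finset.univ_nonempty
  set cmin : ℝ := Finset.univ.inf' hmne (fun i => ‖row A i‖) with hcmin
  have hcminpos : 0 < cmin := by
    rw [hcmin, Finset.lt_inf'_iff]
    intro i _
    exact norm_pos_iff.mpr (hrow i)
  have hcminle : ∀ i, cmin ≤ ‖row A i‖ := fun i =>
    Finset.inf'_le _ (Finset.mem_univ i)
  set δ : ℕ → ℝ := fun k => (ω / cmin) * ‖y (k + 1) - r‖ with hδdef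
  have hδb : ∀ k, ‖e (k + 1) - kstep ω (row A (ik k)) (e k)‖ ≤ δ k := by
    intro k
    rw [hxE k, norm_smul, Real.norm_eq_abs]
    have hapos : 0 < ‖row A (ik k)‖ := norm_pos_iff.mpr (hrow (ik k))
    have hcoord : |(((b + r) - y (k + 1)) (ik k)) - b (ik k)| ≤ ‖y (k + 1) - r‖ := by
      have heq : (((b + r) - y (k + 1)) (ik k)) - b (ik k) = -((y (k + 1) - r) (ik k)) := by
        show (b (ik k) + r (ik k) - y (k + 1) (ik k)) - b (ik k) =
          -(y (k + 1) (ik k) - r (ik k))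
        ring
      rw [heq, abs_neg]
      exact coord_le_norm _ _
    have h1 : |ω * ((((b + r) - y (k + 1)) (ik k)) - b (ik k)) / ‖row A (ik k)‖ ^ 2| *
        ‖row A (ik k)‖ = ω * |(((b + r) - y (k + 1)) (ik k)) - b (ik k)| / ‖row A (ik k)‖ := by
      rw [abs_div, abs_mul, abs_of_pos hω.1, abs_of_pos (pow_pos hapos 2)]
      field_simp
    rw [h1, hδdef]
    show ω * |(((b + r) - y (k + 1)) (ik k)) - b (ik k)| / ‖row A (ik k)‖ ≤
      ω / cmin * ‖y (k + 1) - r‖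
    have h2 : ω * |(((b + r) - y (k + 1)) (ik k)) - b (ik k)| / ‖row A (ik k)‖ ≤
        ω * ‖y (k + 1) - r‖ / cmin := by
      apply div_le_div₀ (by have h3 := hω.1; positivity)
        (mul_le_mul_of_nonneg_left hcoord hω.1.le) hcminpos (hcminle _)
    calc ω * |(((b + r) - y (k + 1)) (ik k)) - b (ik k)| / ‖row A (ik k)‖
        ≤ ω * ‖y (k + 1) - r‖ / cmin := h2
      _ = ω / cmin * ‖y (k + 1) - r‖ := by ring
  have hδ0 : Tendsto δ atTop (nhds 0) := by
    have hshift : Tendsto (fun k => y (k + 1) - r) atTop (nhds 0) :=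
      hytend.comp (tendsto_add_atTop_nat 1)
    have hnorm : Tendsto (fun k => ‖y (k + 1) - r‖) atTop (nhds 0) := by
      have := hshift.norm
      simpa using this
    have := hnorm.const_mul (ω / cmin)
    simpa [hδdef] using this
  have hxtend : Tendsto e atTop (nhds 0) := by
    apply conv_to_zero (row A) hrow hω (m₀ + 1) ik
      (fun k i => by obtain ⟨l, h1, h2, h3⟩ := hiac k i; exact ⟨l, by omega, by omega, h3⟩)
      e heS δ hδb hδ0
  rw [he] at hxtend
  exact tendsto_sub_nhds_zero_iff.mp hxtend
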